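/- arXiv:1108.4887 — 7 statements merged into one kernel-verified Lean document; each statement's English description precedes it below -/
import Mathlib

section
/- There exist constants C₁ > 0 and C₂ > 0 such that for every real δ with 0 ≤ δ < C₁ and every matrix A ∈ SL(2,ℝ) with ‖A − I‖∞ ≤ δ, there exist real numbers t, y, θ with |t| ≤ C₂δ, |y| ≤ C₂δ, |θ| ≤ C₂δ and A = n(t)·a(y)·K(θ). -/
open Real Matrix

/-- `n t = [[1, t], [0, 1]]`. -/
noncomputable def n (t : ℝ) : Matrix (Fin 2) (Fin 2) ℝ := !![1, t; 0, 1]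

/-- `a y = [[e^{y/2}, 0], [0, e^{-y/2}]]`. -/
noncomputable def a (y : ℝ) : Matrix (Fin 2) (Fin 2) ℝ :=
  !![Real.exp (y / 2), 0; 0, Real.exp (-y / 2)]

/-- `K θ = [[cos θ, sin θ], [-sin θ, cos θ]]`. -/
noncomputable def K (θ : ℝ) : Matrix (Fin 2) (Fin 2) ℝ :=
  !![Real.cos θ, Real.sin θ; -Real.sin θ, Real.cos θ]

/-- The maximum of the absolute values of the entries of a real 2×2 matrix. -/
noncomputable def mnorm (M : Matrix (Fin 2) (Fin 2) ℝ) : ℝ :=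
  max (max |M 0 0| |M 0 1|) (max |M 1 0| |M 1 1|)

/-!
The bottom row of `n t * a y * K θ` is `e^{-y/2} (-sin θ, cos θ)`, so when `A 1 1 > 0` the
factors are read off the bottom row `(c, d)` of `A`: `e^{-y/2} = √(c² + d²)`, `θ = arctan (-c/d)`,
and then `det A = 1` forces `t = (A 0 0 * c + A 0 1 * d) / (c² + d²)`. Near the identity each of
these is `O(δ)`, by `|log x| ≤ 2|x - 1|` near `1` and `|arctan x| ≤ |x|`.
-/

lemma abs_arctan_le_abs (x : ℝ) : |arctan x| ≤ |x| := by
  have key : arctan |x| ≤ |x| := by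
    simpa using le_tan (arctan_nonneg.2 (abs_nonneg x)) (arctan_lt_pi_div_two _)
  have h₁ := arctan_le_arctan_iff.2 (le_abs_self x)
  have h₂ := arctan_le_arctan_iff.2 (neg_le_abs x)
  rw [arctan_neg] at h₂
  exact abs_le.2 ⟨by linarith, by linarith⟩

lemma abs_log_le_of_abs_sub_one_le {x ε : ℝ} (hx : |x - 1| ≤ ε) (hε : ε ≤ 1 / 2) :
    |log x| ≤ 2 * ε := by
  obtain ⟨hlo, hhi⟩ := abs_le.1 hx
  have hpos : 0 < x := by linarith
  have hupper := log_le_sub_one_of_pos hpos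
  have hlower := one_sub_inv_le_log_of_pos hpos
  have hinv : 1 - x⁻¹ = (x - 1) / x := by field_simp
  have : -(2 * ε) ≤ (x - 1) / x := by
    rw [le_div_iff₀ hpos]; nlinarith
  exact abs_le.2 ⟨by linarith, by linarith⟩

lemma a_neg_two_mul_log {r : ℝ} (hr : 0 < r) : a (-2 * log r) = !![r⁻¹, 0; 0, r] := by
  rw [a, show -2 * log r / 2 = -log r by ring, show -(-2 * log r) / 2 = log r by ring, exp_neg,
    exp_log hr]

lemma eq_n_mul_a_mul_K {A : Matrix (Fin 2) (Fin 2) ℝ} (hdet : A.det = 1) {r θ : ℝ} (hr : 0 < r)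
    (hcos : cos θ = A 1 1 / r) (hsin : sin θ = -A 1 0 / r) :
    A = n ((A 0 0 * A 1 0 + A 0 1 * A 1 1) / r ^ 2) * a (-2 * log r) * K θ := by
  have hr2 : r ^ 2 = A 1 0 ^ 2 + A 1 1 ^ 2 := by
    have := sin_sq_add_cos_sq θ
    rw [hcos, hsin] at this
    field_simp at this
    linarith
  rw [det_fin_two] at hdet
  rw [a_neg_two_mul_log hr, n, K, mul_fin_two, mul_fin_two, hcos, hsin]
  ext i j
  fin_cases i <;> fin_cases j <;> simp <;> field_simp
  · linear_combination A 0 0 * hr2 + A 1 1 * hdet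
  · linear_combination A 0 1 * hr2 - A 1 0 * hdet

lemma cos_arctan_div {c d : ℝ} (hd : 0 < d) : cos (arctan (c / d)) = d / √(c ^ 2 + d ^ 2) := by
  have h : √(1 + (c / d) ^ 2) = √(c ^ 2 + d ^ 2) / d := by
    rw [← sqrt_sq hd.le, ← sqrt_div' _ (sq_nonneg d), sqrt_sq hd.le]
    congr 1; field_simp; ring
  rw [cos_arctan, h, one_div_div]

lemma sin_arctan_div {c d : ℝ} (hd : 0 < d) : sin (arctan (c / d)) = c / √(c ^ 2 + d ^ 2) := by
  rw [← tan_mul_cos (cos_arctan_pos _).ne', tan_arctan, cos_arctan_div hd]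
  field_simp

theorem eq_n_mul_a_mul_K_of_pos {A : Matrix (Fin 2) (Fin 2) ℝ} (hdet : A.det = 1) (hd : 0 < A 1 1) :
    A = n ((A 0 0 * A 1 0 + A 0 1 * A 1 1) / (A 1 0 ^ 2 + A 1 1 ^ 2)) *
      a (-log (A 1 0 ^ 2 + A 1 1 ^ 2)) * K (arctan (-A 1 0 / A 1 1)) := by
  have hs : 0 < A 1 0 ^ 2 + A 1 1 ^ 2 := by positivity
  have h := eq_n_mul_a_mul_K hdet (sqrt_pos.2 hs) (by rw [cos_arctan_div hd, neg_sq])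
    (by rw [sin_arctan_div hd, neg_sq])
  rwa [sq_sqrt hs.le, log_sqrt hs.le, neg_mul, mul_div_cancel₀ _ two_ne_zero] at h

lemma abs_entries_le_of_mnorm_sub_one_le {A : Matrix (Fin 2) (Fin 2) ℝ} {δ : ℝ}
    (h : mnorm (A - 1) ≤ δ) : |A 0 0 - 1| ≤ δ ∧ |A 0 1| ≤ δ ∧ |A 1 0| ≤ δ ∧ |A 1 1 - 1| ≤ δ := by
  simpa [mnorm, and_assoc] using h

section

variable {p q c d δ : ℝ}

lemma abs_log_sq_add_sq_le (hc : |c| ≤ δ) (hd : |d - 1| ≤ δ) (hδ : δ ≤ 1 / 10) :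
    |log (c ^ 2 + d ^ 2)| ≤ 6 * δ := by
  obtain ⟨hd₁, hd₂⟩ := abs_le.1 hd
  have hc2 : c ^ 2 ≤ δ * δ := by rw [← sq_abs, sq]; exact mul_self_le_mul_self (abs_nonneg c) hc
  have : |c ^ 2 + d ^ 2 - 1| ≤ 3 * δ := abs_le.2 ⟨by nlinarith, by nlinarith⟩
  linarith [abs_log_le_of_abs_sub_one_le this (by linarith)]

lemma abs_arctan_div_le (hc : |c| ≤ δ) (hd : |d - 1| ≤ δ) (hδ : δ ≤ 1 / 10) :
    |arctan (c / d)| ≤ 2 * δ := by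
  obtain ⟨hd₁, -⟩ := abs_le.1 hd
  have hd₀ : 0 < d := by linarith
  refine (abs_arctan_le_abs _).trans ?_
  rw [abs_div, abs_of_pos hd₀, div_le_iff₀ hd₀]
  nlinarith [abs_nonneg c]

lemma abs_div_sq_add_sq_le (hp : |p - 1| ≤ δ) (hq : |q| ≤ δ) (hc : |c| ≤ δ) (hd : |d - 1| ≤ δ)
    (hδ : δ ≤ 1 / 10) : |(p * c + q * d) / (c ^ 2 + d ^ 2)| ≤ 3 * δ := by
  obtain ⟨hd₁, hd₂⟩ := abs_le.1 hd
  obtain ⟨hp₁, hp₂⟩ := abs_le.1 hp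
  have hδ₀ : 0 ≤ δ := (abs_nonneg q).trans hq
  have hpc : |p * c| ≤ 11 / 10 * δ := by
    rw [abs_mul]
    exact mul_le_mul (abs_le.2 ⟨by linarith, by linarith⟩) hc (abs_nonneg c) (by norm_num)
  have hqd : |q * d| ≤ δ * (11 / 10) := by
    rw [abs_mul]
    exact mul_le_mul hq (abs_le.2 ⟨by linarith, by linarith⟩) (abs_nonneg d) hδ₀
  have hsq : 81 / 100 ≤ c ^ 2 + d ^ 2 := by nlinarith
  have hpos : 0 < c ^ 2 + d ^ 2 := by linarith
  rw [abs_div, abs_of_pos hpos, div_le_iff₀ hpos]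
  calc |p * c + q * d| ≤ |p * c| + |q * d| := abs_add_le _ _
    _ ≤ 3 * δ * (81 / 100) := by linarith
    _ ≤ 3 * δ * (c ^ 2 + d ^ 2) := by gcongr

end

theorem stmt0 :
    ∃ C₁ > (0 : ℝ), ∃ C₂ > (0 : ℝ), ∀ δ : ℝ, 0 ≤ δ → δ < C₁ →
      ∀ A : Matrix (Fin 2) (Fin 2) ℝ, A.det = 1 → mnorm (A - 1) ≤ δ →
        ∃ t y θ : ℝ, |t| ≤ C₂ * δ ∧ |y| ≤ C₂ * δ ∧ |θ| ≤ C₂ * δ ∧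
          A = n t * a y * K θ := by
  refine ⟨1 / 10, by norm_num, 6, by norm_num, fun δ _ hδ A hdet hA => ?_⟩
  obtain ⟨hp, hq, hc, hd⟩ := abs_entries_le_of_mnorm_sub_one_le hA
  have hc' : |-A 1 0| ≤ δ := by rwa [abs_neg]
  have hd₀ : 0 < A 1 1 := by linarith [(abs_le.1 hd).1]
  refine ⟨_, _, _, ?_, ?_, ?_, eq_n_mul_a_mul_K_of_pos hdet hd₀⟩
  · linarith [abs_div_sq_add_sq_le hp hq hc hd hδ.le]
  · rw [abs_neg]; exact abs_log_sq_add_sq_le hc hd hδ.le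
  · linarith [abs_arctan_div_le hc' hd hδ.le]
end

section
/- There exists an absolute constant c > 0 such that: for all η > 0 and ε > 0 there exists T₀ > 0 (depending only on ε) such that for every T ≥ T₀, every A ∈ SL(2,ℝ) with ‖A − I‖∞ ≤ T^{-(2η+ε)}, and every t ∈ [0, T^η], there exist real numbers t', y', θ' with |t'| ≤ cT^{-ε}, |y'| ≤ cT^{-ε}, |θ'| ≤ cT^{-ε} and n(-t)·A·n(t) = n(t')·a(y')·K(θ'). (Slow divergence of the horocycle flow: if two points of SL(2,ℝ) are within T^{-(2η+ε)} of each other, their images under the time-t horocycle flow stay within O(T^{-ε}) of each other for all 0 ≤ t ≤ T^η.) -/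
open Real Matrix

lemma abs_log_le_two_mul_abs_sub_one {u : ℝ} (hu : 1 / 2 ≤ u) : |log u| ≤ 2 * |u - 1| := by
  have hu0 : 0 < u := by linarith
  have hinv : u⁻¹ - 1 ≤ 2 * |u - 1| := by
    rw [inv_eq_one_div, div_sub_one hu0.ne', div_le_iff₀ hu0]
    nlinarith [neg_abs_le (u - 1), abs_nonneg (u - 1)]
  rw [abs_le]
  constructor
  · linarith [one_sub_inv_le_log_of_pos hu0]
  · linarith [log_le_sub_one_of_pos hu0, le_abs_self (u - 1), abs_nonneg (u - 1)]

lemma abs_apply_le_mnorm (M : Matrix (Fin 2) (Fin 2) ℝ) (i j : Fin 2) : |M i j| ≤ mnorm M := by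
  fin_cases i <;> fin_cases j <;> simp [mnorm]

lemma mnorm_le_iff {M : Matrix (Fin 2) (Fin 2) ℝ} {δ : ℝ} : mnorm M ≤ δ ↔ ∀ i j, |M i j| ≤ δ :=
  ⟨fun h i j => (abs_apply_le_mnorm M i j).trans h,
    fun h => max_le (max_le (h 0 0) (h 0 1)) (max_le (h 1 0) (h 1 1))⟩

lemma det_n (t : ℝ) : (n t).det = 1 := by simp [n, det_fin_two]

lemma n_neg_mul_n (t : ℝ) : n (-t) * n t = 1 := by
  ext i j; fin_cases i <;> fin_cases j <;> simp [n]

lemma n_neg_mul_mul_n_sub_one (A : Matrix (Fin 2) (Fin 2) ℝ) (t : ℝ) :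
    n (-t) * A * n t - 1 = n (-t) * (A - 1) * n t := by
  rw [mul_sub, sub_mul, mul_one, n_neg_mul_n]

lemma n_neg_mul_mul_n (X : Matrix (Fin 2) (Fin 2) ℝ) (t : ℝ) :
    n (-t) * X * n t =
      !![X 0 0 - t * X 1 0, t * X 0 0 - t ^ 2 * X 1 0 + X 0 1 - t * X 1 1;
         X 1 0, t * X 1 0 + X 1 1] := by
  rw [eta_fin_two X]
  simp only [n, mul_fin_two, of_apply, cons_val', cons_val_zero, cons_val_one, cons_val_fin_one,
    empty_val', EmbeddingLike.apply_eq_iff_eq, vecCons_inj, and_true]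
  refine ⟨⟨?_, ?_⟩, ?_, ?_⟩ <;> ring

lemma mnorm_n_neg_mul_mul_n_le (X : Matrix (Fin 2) (Fin 2) ℝ) (t : ℝ) :
    mnorm (n (-t) * X * n t) ≤ (1 + |t|) ^ 2 * mnorm X := by
  set δ := mnorm X
  have hX i j : -δ ≤ X i j ∧ X i j ≤ δ := abs_le.mp (abs_apply_le_mnorm X i j)
  have htX i j : -(|t| * δ) ≤ t * X i j ∧ t * X i j ≤ |t| * δ := by
    rw [← abs_le, abs_mul]; gcongr; exact abs_apply_le_mnorm X i j
  have ht2X : -(|t| ^ 2 * δ) ≤ t ^ 2 * X 1 0 ∧ t ^ 2 * X 1 0 ≤ |t| ^ 2 * δ := by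
    rw [← abs_le, abs_mul, abs_pow]; gcongr; exact abs_apply_le_mnorm X 1 0
  have hδ : 0 ≤ δ := (abs_nonneg _).trans (abs_apply_le_mnorm X 0 0)
  have hexp : (1 + |t|) ^ 2 * δ = δ + 2 * (|t| * δ) + |t| ^ 2 * δ := by ring
  have h1 : 0 ≤ |t| * δ := by positivity
  have h2 : 0 ≤ |t| ^ 2 * δ := by positivity
  rw [n_neg_mul_mul_n, mnorm_le_iff]
  intro i j
  fin_cases i <;> fin_cases j <;> simp only [Fin.zero_eta, Fin.mk_one, Matrix.of_apply,
    Matrix.cons_val', Matrix.cons_val_zero, Matrix.cons_val_one, Matrix.empty_val',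
    Matrix.cons_val_fin_one, abs_le] <;>
  constructor <;> linarith [hX 0 0, hX 0 1, hX 1 0, hX 1 1, htX 0 0, htX 1 0, htX 1 1]

lemma eq_n_mul_a_mul_K_s1 {p q r s : ℝ} (hdet : p * s - q * r = 1) (hs : 0 < s) :
    !![p, q; r, s] = n ((p * r + q * s) / (r ^ 2 + s ^ 2)) * a (-log (r ^ 2 + s ^ 2)) *
      K (arctan (-r / s)) := by
  have hu : 0 < r ^ 2 + s ^ 2 := by positivity
  set w := √(r ^ 2 + s ^ 2)
  have hw0 : 0 < w := sqrt_pos.mpr hu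
  have hw2 : w ^ 2 = r ^ 2 + s ^ 2 := sq_sqrt hu.le
  have hexp_pos : exp (-(-log (r ^ 2 + s ^ 2)) / 2) = w := by
    rw [neg_neg, exp_half, exp_log hu]
  have hexp_neg : exp (-log (r ^ 2 + s ^ 2) / 2) = w⁻¹ := by
    rw [exp_half, exp_neg, exp_log hu, sqrt_inv]
  have hroot : √(1 + (-r / s) ^ 2) = w / s := by
    rw [show 1 + (-r / s) ^ 2 = (w / s) ^ 2 by field_simp; linear_combination -hw2,
      sqrt_sq (by positivity)]
  have hcos : cos (arctan (-r / s)) = s / w := by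
    rw [cos_arctan, hroot]; field_simp
  have hsin : sin (arctan (-r / s)) = -r / w := by
    rw [sin_arctan, hroot]; field_simp
  simp only [n, a, K, mul_fin_two, hexp_pos, hexp_neg, hcos, hsin,
    EmbeddingLike.apply_eq_iff_eq, vecCons_inj, and_true]
  refine ⟨⟨?_, ?_⟩, ?_, ?_⟩ <;> field_simp
  · linear_combination
      (p * (r ^ 2 + s ^ 2) - r * (p * r + s * q)) * hw2 + (r ^ 2 + s ^ 2) * s * hdet
  · linear_combination
      (q * (r ^ 2 + s ^ 2) - s * (r * p + q * s)) * hw2 - (r ^ 2 + s ^ 2) * r * hdet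
  all_goals ring

lemma exists_eq_n_mul_a_mul_K_of_mnorm_sub_one_le {M : Matrix (Fin 2) (Fin 2) ℝ} {δ : ℝ}
    (hdet : M.det = 1) (hδ : δ ≤ 1 / 10) (hM : mnorm (M - 1) ≤ δ) :
    ∃ t y θ : ℝ, |t| ≤ 5 * δ ∧ |y| ≤ 5 * δ ∧ |θ| ≤ 5 * δ ∧ M = n t * a y * K θ := by
  have hentry i j : |(M - 1) i j| ≤ δ := mnorm_le_iff.mp hM i j
  obtain ⟨hp1, hp2⟩ : -δ ≤ M 0 0 - 1 ∧ M 0 0 - 1 ≤ δ := abs_le.mp (by simpa using hentry 0 0)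
  obtain ⟨hq1, hq2⟩ : -δ ≤ M 0 1 ∧ M 0 1 ≤ δ := abs_le.mp (by simpa using hentry 0 1)
  obtain ⟨hr1, hr2⟩ : -δ ≤ M 1 0 ∧ M 1 0 ≤ δ := abs_le.mp (by simpa using hentry 1 0)
  obtain ⟨hs1, hs2⟩ : -δ ≤ M 1 1 - 1 ∧ M 1 1 - 1 ≤ δ := abs_le.mp (by simpa using hentry 1 1)
  rw [det_fin_two] at hdet
  have hs : 0 < M 1 1 := by linarith
  have hu : 81 / 100 ≤ M 1 0 ^ 2 + M 1 1 ^ 2 := by nlinarith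
  refine ⟨_, _, _, ?_, ?_, ?_, (eta_fin_two M).trans (eq_n_mul_a_mul_K_s1 hdet hs)⟩
  · have hu0 : 0 < M 1 0 ^ 2 + M 1 1 ^ 2 := by linarith
    rw [abs_div, abs_of_pos hu0, div_le_iff₀ hu0, abs_le]
    constructor <;> nlinarith
  · rw [abs_neg]
    refine (abs_log_le_two_mul_abs_sub_one (by linarith)).trans ?_
    have : |M 1 0 ^ 2 + M 1 1 ^ 2 - 1| ≤ 5 / 2 * δ := by
      rw [abs_le]; constructor <;> nlinarith
    linarith
  · refine (abs_arctan_le_abs _).trans ?_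
    rw [abs_div, abs_neg, abs_of_pos hs, div_le_iff₀ hs, abs_le]
    constructor <;> nlinarith

lemma rpow_neg_le_inv_of_rpow_inv_le {b ε T : ℝ} (hb : 0 < b) (hε : 0 < ε) (hT : b ^ ε⁻¹ ≤ T) :
    T ^ (-ε) ≤ b⁻¹ := by
  calc T ^ (-ε) ≤ (b ^ ε⁻¹) ^ (-ε) := rpow_le_rpow_of_nonpos (by positivity) hT (by linarith)
    _ = b⁻¹ := by rw [← rpow_mul hb.le, inv_mul_eq_div, neg_div, div_self hε.ne', rpow_neg_one]

lemma one_add_sq_mul_rpow_le {T η ε t : ℝ} (hT : 1 ≤ T) (hη : 0 ≤ η) (ht0 : 0 ≤ t)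
    (ht : t ≤ T ^ η) : (1 + t) ^ 2 * T ^ (-(2 * η + ε)) ≤ 4 * T ^ (-ε) := by
  have hTη : 1 ≤ T ^ η := one_le_rpow hT hη
  have hsplit : T ^ (-ε) = (T ^ η) ^ 2 * T ^ (-(2 * η + ε)) := by
    rw [← rpow_natCast, ← rpow_mul (by linarith), ← rpow_add (by linarith)]
    ring_nf
  rw [hsplit, ← mul_assoc]
  gcongr
  nlinarith

/-- Slow divergence of the horocycle flow. -/
theorem stmt1 :
    ∃ c > (0 : ℝ), ∀ η : ℝ, 0 < η → ∀ ε : ℝ, 0 < ε →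
      ∃ T₀ > (0 : ℝ), ∀ T : ℝ, T₀ ≤ T →
        ∀ A : Matrix (Fin 2) (Fin 2) ℝ, A.det = 1 →
          mnorm (A - 1) ≤ T ^ (-(2 * η + ε)) →
            ∀ t : ℝ, 0 ≤ t → t ≤ T ^ η →
              ∃ t' y' θ' : ℝ, |t'| ≤ c * T ^ (-ε) ∧ |y'| ≤ c * T ^ (-ε) ∧
                |θ'| ≤ c * T ^ (-ε) ∧
                n (-t) * A * n t = n t' * a y' * K θ' := by
  refine ⟨20, by norm_num, fun η hη ε hε => ⟨40 ^ ε⁻¹, by positivity, ?_⟩⟩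
  intro T hT A hdet hA t ht0 htT
  have hT1 : 1 ≤ T := (one_le_rpow (by norm_num) (by positivity)).trans hT
  have hsmall : T ^ (-ε) ≤ 40⁻¹ := rpow_neg_le_inv_of_rpow_inv_le (by norm_num) hε hT
  have hconj_det : (n (-t) * A * n t).det = 1 := by simp only [det_mul, det_n, hdet, mul_one]
  have hconj : mnorm (n (-t) * A * n t - 1) ≤ 4 * T ^ (-ε) := by
    rw [n_neg_mul_mul_n_sub_one]
    calc _ ≤ (1 + |t|) ^ 2 * mnorm (A - 1) := mnorm_n_neg_mul_mul_n_le _ _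
      _ ≤ (1 + t) ^ 2 * T ^ (-(2 * η + ε)) := by rw [abs_of_nonneg ht0]; gcongr
      _ ≤ 4 * T ^ (-ε) := one_add_sq_mul_rpow_le hT1 hη.le ht0 htT
  obtain ⟨t', y', θ', ht', hy', hθ', heq⟩ :=
    exists_eq_n_mul_a_mul_K_of_mnorm_sub_one_le hconj_det (by linarith) hconj
  exact ⟨t', y', θ', by linarith, by linarith, by linarith, heq⟩
end

section
/- For every T > 0 and u₀, t ∈ ℝ with 1 + u₀/T > 0 and 1 + (u₀+t)/T > 0, one has the cocycle identity ω(u₀+t) = ω(u₀) · n(−t/(1+u₀/T)) · a( log(1+(u₀+t)/T) − log(1+u₀/T) ). -/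
open Real Matrix

/-- `ω T u = [[(1+u/T)^{1/2}, -u(1+u/T)^{-1/2}], [0, (1+u/T)^{-1/2}]]`. -/
noncomputable def ω (T u : ℝ) : Matrix (Fin 2) (Fin 2) ℝ :=
  !![(1 + u / T) ^ ((1 : ℝ) / 2), -u * (1 + u / T) ^ (-(1 : ℝ) / 2);
     0, (1 + u / T) ^ (-(1 : ℝ) / 2)]

/-! `ω T u` factors as `n (-u) * a (log (1 + u / T))`, so the identity is a computation in the
upper triangular group: `n` and `a` are homomorphisms and `a y` conjugates `n t` to `n (exp y * t)`,
which absorbs the factor `1 + u₀ / T = exp (log (1 + u₀ / T))`. -/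

theorem n_add (s t : ℝ) : n (s + t) = n s * n t := by
  simp [n, add_comm]

theorem a_add (x y : ℝ) : a (x + y) = a x * a y := by
  simp only [a, mul_fin_two, ← exp_add]
  congr 2 <;> ring_nf

theorem a_mul_n (y t : ℝ) : a y * n t = n (exp y * t) * a y := by
  have hexp : exp y * exp (-y / 2) = exp (y / 2) := by rw [← exp_add]; ring_nf
  simp only [a, n, mul_fin_two]
  congr 2 <;> simp [mul_right_comm _ t, hexp]

theorem ω_eq_n_mul_a {T u : ℝ} (h : 0 < 1 + u / T) :
    ω T u = n (-u) * a (log (1 + u / T)) := by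
  rw [ω, n, a, mul_fin_two, rpow_def_of_pos h, rpow_def_of_pos h]
  congr 2 <;> ring_nf

theorem stmt6_general (T : ℝ) (u₀ t : ℝ) (h₀ : 0 < 1 + u₀ / T)
    (h₁ : 0 < 1 + (u₀ + t) / T) :
    ω T (u₀ + t) =
      ω T u₀ * n (-t / (1 + u₀ / T)) *
        a (Real.log (1 + (u₀ + t) / T) - Real.log (1 + u₀ / T)) := by
  rw [ω_eq_n_mul_a h₀, ω_eq_n_mul_a h₁, mul_assoc (n _), a_mul_n, exp_log h₀,
    mul_div_cancel₀ _ h₀.ne', ← mul_assoc, ← n_add, mul_assoc, ← a_add, add_sub_cancel, neg_add]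

/-- Cocycle identity for the approximate horocycle. -/
theorem stmt6 (T : ℝ) (hT : 0 < T) (u₀ t : ℝ) (h₀ : 0 < 1 + u₀ / T)
    (h₁ : 0 < 1 + (u₀ + t) / T) :
    ω T (u₀ + t) =
      ω T u₀ * n (-t / (1 + u₀ / T)) *
        a (Real.log (1 + (u₀ + t) / T) - Real.log (1 + u₀ / T)) :=
  stmt6_general T u₀ t h₀ h₁
end

section
/- Let k ∈ ℤ, A ≥ 0, C > 0, and let (a_n)_{n≥1} be complex numbers with |a_n| ≤ C·n^A for all n. Define f(z) = Σ_{n=1}^∞ a_n e(nz) for z in the upper half plane. Let T > 0, α = −1 + i/T, and let s ∈ ℂ with Re(s) + (k−1)/2 > A + 2. Then the integral ∫_0^∞ f(αt) t^{s+(k−1)/2−1} dt and the series Σ_{n=1}^∞ a_n n^{−s−(k−1)/2} converge absolutely, and ∫_0^∞ f(αt) t^{s+(k−1)/2−1} dt = (2π)^{−(s+(k−1)/2)} · (−αi)^{−(s+(k−1)/2)} · Γ(s+(k−1)/2) · Σ_{n=1}^∞ a_n n^{−s−(k−1)/2}, where −αi = 1/T + i and complex powers are taken with the principal branch of the logarithm.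 -/
/-!
Since `Re (-α i) = 1 / T > 0`, on the ray `t ↦ α t` the series is a sum of decaying exponentials
`f (α t) = ∑ aₙ exp (-cₙ t)` with `cₙ = 2π n (-α i)`. For `Re c > 0` one has
`∫₀^∞ t^(w-1) e^(-c t) dt = c^(-w) Γ(w)`, by analytic continuation in `c` from the positive reals.
The absolute values of the terms integrate to `Γ(Re w) |aₙ| (Re cₙ)^(-Re w)`, which is summable
because `aₙ` grows polynomially, so sum and integral may be interchanged.
-/

open Real MeasureTheory Set Filter
open scoped Topology ENNReal

namespace Complex

lemma ofReal_mul_cpow {r : ℝ} (hr : 0 < r) (z w : ℂ) : ((r : ℂ) * z) ^ w = (r : ℂ) ^ w * z ^ w := by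
  rcases eq_or_ne z 0 with rfl | hz
  · rcases eq_or_ne w 0 with rfl | hw <;> simp [*]
  have hr' : (r : ℂ) ≠ 0 := ofReal_ne_zero.mpr hr.ne'
  rw [cpow_def_of_ne_zero (mul_ne_zero hr' hz), log_ofReal_mul hr hz, add_mul, exp_add,
    cpow_def_of_ne_zero hz, cpow_def_of_ne_zero hr', ofReal_log hr.le]

lemma norm_cpow_mul_cexp_neg_mul {t : ℝ} (ht : 0 < t) (w b : ℂ) :
    ‖(t : ℂ) ^ (w - 1) * cexp (-(b * t))‖ = t ^ (w.re - 1) * rexp (-(b.re * t)) := by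
  rw [norm_mul, norm_exp, norm_cpow_eq_rpow_re_of_pos ht]
  simp

lemma continuousOn_cpow_mul_cexp_neg_mul (w b : ℂ) :
    ContinuousOn (fun t : ℝ ↦ (t : ℂ) ^ (w - 1) * cexp (-(b * t))) (Ioi 0) := by
  refine ContinuousOn.mul (fun t ht ↦ ?_) (by fun_prop)
  exact ((continuousAt_cpow_const (ofReal_mem_slitPlane.2 ht)).comp
    continuous_ofReal.continuousAt).continuousWithinAt

lemma integrableOn_cpow_mul_cexp_neg_mul_Ioi {w b : ℂ} (hw : 0 < w.re) (hb : 0 < b.re) :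
    IntegrableOn (fun t : ℝ ↦ (t : ℂ) ^ (w - 1) * cexp (-(b * t))) (Ioi 0) := by
  have hreal := integrableOn_rpow_mul_exp_neg_mul_rpow (s := w.re - 1) (by linarith) one_pos hb
  refine hreal.mono' ((continuousOn_cpow_mul_cexp_neg_mul w b).aestronglyMeasurable
    measurableSet_Ioi) ((ae_restrict_iff' measurableSet_Ioi).mpr (ae_of_all _ fun t ht ↦ ?_))
  rw [norm_cpow_mul_cexp_neg_mul ht, rpow_one, neg_mul]

lemma differentiableOn_integral_cpow_mul_cexp_neg_mul {w : ℂ} (hw : 0 < w.re) :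
    DifferentiableOn ℂ (fun b : ℂ ↦ ∫ t in Ioi (0 : ℝ), (t : ℂ) ^ (w - 1) * cexp (-(b * t)))
      {b | 0 < b.re} := by
  intro b₀ hb₀
  have hε : 0 < b₀.re / 2 := half_pos hb₀
  -- the derivative `-t ^ w e^(-b t)` is minus the integrand at `w + 1`, hence `w + 1 - 1`
  have hderiv_le : ∀ t ∈ Ioi (0 : ℝ), ∀ b ∈ Metric.ball b₀ (b₀.re / 2),
      ‖-((t : ℂ) ^ (w + 1 - 1) * cexp (-(b * t)))‖ ≤
        t ^ ((w + 1).re - 1) * rexp (-(b₀.re / 2 * t)) := by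
    intro t ht b hb
    have hre := (abs_le.mp ((abs_re_le_norm (b - b₀)).trans (mem_ball_iff_norm.mp hb).le)).1
    rw [sub_re] at hre
    rw [norm_neg, norm_cpow_mul_cexp_neg_mul ht]
    have ht : 0 < t := ht
    gcongr
    linarith
  have hderiv : ∀ t ∈ Ioi (0 : ℝ), ∀ b : ℂ, HasDerivAt
      (fun b : ℂ ↦ (t : ℂ) ^ (w - 1) * cexp (-(b * t)))
      (-((t : ℂ) ^ (w + 1 - 1) * cexp (-(b * t)))) b := by
    intro t ht b
    have hpow : (t : ℂ) ^ (w + 1 - 1) = (t : ℂ) ^ (w - 1) * t := by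
      rw [show w + 1 - 1 = (w - 1) + 1 by ring, cpow_add _ _ (ofReal_ne_zero.mpr (ne_of_gt ht)),
        cpow_one]
    refine ((((hasDerivAt_id b).mul_const (t : ℂ)).neg.cexp).const_mul
      ((t : ℂ) ^ (w - 1))).congr_deriv ?_
    simp only [hpow, Pi.neg_apply, id]
    ring
  have hbound := integrableOn_rpow_mul_exp_neg_mul_rpow (s := (w + 1).re - 1)
    (by rw [add_re, one_re]; linarith) one_pos hε
  refine (hasDerivAt_integral_of_dominated_loc_of_deriv_le (μ := volume.restrict (Ioi 0))
    (Metric.ball_mem_nhds b₀ hε)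
    (Eventually.of_forall fun b ↦
      (continuousOn_cpow_mul_cexp_neg_mul w b).aestronglyMeasurable measurableSet_Ioi)
    (integrableOn_cpow_mul_cexp_neg_mul_Ioi hw hb₀)
    ((continuousOn_cpow_mul_cexp_neg_mul (w + 1) b₀).neg.aestronglyMeasurable measurableSet_Ioi)
    ((ae_restrict_iff' measurableSet_Ioi).mpr (ae_of_all _ hderiv_le))
    (by simpa [IntegrableOn, rpow_one, neg_mul] using hbound)
    ((ae_restrict_iff' measurableSet_Ioi).mpr (ae_of_all _ fun t ht b _ ↦ hderiv t ht b))
    ).2.differentiableAt.differentiableWithinAt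

theorem integral_cpow_mul_cexp_neg_mul_Ioi {w b : ℂ} (hw : 0 < w.re) (hb : 0 < b.re) :
    ∫ t in Ioi (0 : ℝ), (t : ℂ) ^ (w - 1) * cexp (-(b * t)) = b ^ (-w) * Gamma w := by
  have hU : IsOpen {z : ℂ | 0 < z.re} := isOpen_lt continuous_const continuous_re
  have hlhs := (differentiableOn_integral_cpow_mul_cexp_neg_mul hw).analyticOnNhd hU
  have hrhs : AnalyticOnNhd ℂ (fun z : ℂ ↦ z ^ (-w) * Gamma w) {z | 0 < z.re} :=
    DifferentiableOn.analyticOnNhd (fun z hz ↦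
      ((differentiableAt_id.cpow_const (Or.inl hz)).mul_const _).differentiableWithinAt) hU
  have hreal : ∀ r : ℝ, 0 < r →
      ∫ t in Ioi (0 : ℝ), (t : ℂ) ^ (w - 1) * cexp (-(r * t)) = (r : ℂ) ^ (-w) * Gamma w := by
    intro r hr
    rw [integral_cpow_mul_exp_neg_mul_Ioi hw hr, one_div,
      inv_cpow _ _ (by rw [arg_ofReal_of_nonneg hr.le]; exact pi_ne_zero.symm), cpow_neg]
  -- the two sides agree on the positive reals, which accumulate at `1`
  have hfreq : ∃ᶠ z in 𝓝[≠] (1 : ℂ),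
      ∫ t in Ioi (0 : ℝ), (t : ℂ) ^ (w - 1) * cexp (-(z * t)) = z ^ (-w) * Gamma w := by
    have hmap : Tendsto ((↑) : ℝ → ℂ) (𝓝[≠] 1) (𝓝[≠] 1) :=
      continuous_ofReal.continuousWithinAt.tendsto_nhdsWithin fun x hx ↦ by simpa using hx
    exact hmap.frequently
      ((eventually_nhdsWithin_of_eventually_nhds (eventually_gt_nhds one_pos)).mono
        hreal).frequently
  exact hlhs.eqOn_of_preconnected_of_frequently_eq hrhs (convex_halfSpace_re_gt 0).isPreconnected
    (by simp) hfreq hb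

end Complex

namespace MeasureTheory

theorem integrable_tsum_of_summable_integral_norm {α E ι : Type*} [MeasurableSpace α]
    {μ : Measure α} [NormedAddCommGroup E] [CompleteSpace E] [SecondCountableTopology E]
    [MeasurableSpace E] [BorelSpace E] [Countable ι] {F : ι → α → E}
    (hF_int : ∀ i, Integrable (F i) μ) (hF_sum : Summable fun i ↦ ∫ a, ‖F i a‖ ∂μ) :
    Integrable (fun a ↦ ∑' i, F i a) μ := by
  refine ⟨(AEMeasurable.tsum fun i ↦ (hF_int i).aemeasurable).aestronglyMeasurable, ?_⟩
  have hmeas i := (hF_int i).aestronglyMeasurable.enorm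
  calc ∫⁻ a, ‖∑' i, F i a‖ₑ ∂μ ≤ ∫⁻ a, ∑' i, ‖F i a‖ₑ ∂μ :=
        lintegral_mono fun _ ↦ enorm_tsum_le_tsum_enorm
    _ = ∑' i, ENNReal.ofReal (∫ a, ‖F i a‖ ∂μ) := by
        simp_rw [lintegral_tsum hmeas, ofReal_integral_norm_eq_lintegral_enorm (hF_int _)]
    _ = ENNReal.ofReal (∑' i, ∫ a, ‖F i a‖ ∂μ) :=
        (ENNReal.ofReal_tsum_of_nonneg (fun i ↦ integral_nonneg fun _ ↦ norm_nonneg _) hF_sum).symm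
    _ < ∞ := ENNReal.ofReal_lt_top

end MeasureTheory

section DirichletSeries

open Complex

lemma integral_norm_mul_cpow_mul_cexp_neg_mul {c w : ℂ} (hc : 0 < c.re) (hw : 0 < w.re) (a : ℂ) :
    ∫ t in Ioi (0 : ℝ), ‖a * ((t : ℂ) ^ (w - 1) * cexp (-(c * t)))‖ =
      Real.Gamma w.re * (‖a‖ / c.re ^ w.re) := by
  have h : ∀ t ∈ Ioi (0 : ℝ), ‖a * ((t : ℂ) ^ (w - 1) * cexp (-(c * t)))‖ =
      ‖a‖ * (t ^ (w.re - 1) * rexp (-(c.re * t))) := fun t ht ↦ by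
    rw [norm_mul, norm_cpow_mul_cexp_neg_mul ht]
  rw [setIntegral_congr_fun measurableSet_Ioi h, integral_const_mul,
    Real.integral_rpow_mul_exp_neg_mul_Ioi hw hc, one_div, Real.inv_rpow hc.le]
  ring

variable {ι : Type*} {a c : ι → ℂ} {w : ℂ} {F : ℝ → ℂ}

lemma summable_integral_norm_mul_cpow_mul_cexp_neg_mul (hc : ∀ i, 0 < (c i).re) (hw : 0 < w.re)
    (hsum : Summable fun i ↦ ‖a i‖ / (c i).re ^ w.re) :
    Summable fun i ↦ ∫ t in Ioi (0 : ℝ), ‖a i * ((t : ℂ) ^ (w - 1) * cexp (-(c i * t)))‖ := by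
  simpa only [integral_norm_mul_cpow_mul_cexp_neg_mul (hc _) hw] using hsum.mul_left _

lemma mellin_eq_integral_tsum (hF : ∀ t ∈ Ioi 0, F t = ∑' i, a i * cexp (-(c i * t))) :
    mellin F w =
      ∫ t in Ioi (0 : ℝ), ∑' i, a i * ((t : ℂ) ^ (w - 1) * cexp (-(c i * t))) := by
  refine setIntegral_congr_fun measurableSet_Ioi fun t ht ↦ ?_
  simp only [smul_eq_mul, hF t ht, ← tsum_mul_left, mul_left_comm]

variable [Countable ι]

theorem mellinConvergent_of_tsum_cexp (hc : ∀ i, 0 < (c i).re) (hw : 0 < w.re)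
    (hF : ∀ t ∈ Ioi 0, F t = ∑' i, a i * cexp (-(c i * t)))
    (hsum : Summable fun i ↦ ‖a i‖ / (c i).re ^ w.re) :
    MellinConvergent F w := by
  refine IntegrableOn.congr_fun (integrable_tsum_of_summable_integral_norm
    (fun i ↦ (integrableOn_cpow_mul_cexp_neg_mul_Ioi hw (hc i)).const_mul (a i))
    (summable_integral_norm_mul_cpow_mul_cexp_neg_mul hc hw hsum)) (fun t ht ↦ ?_)
    measurableSet_Ioi
  simp only [smul_eq_mul, hF t ht, ← tsum_mul_left, mul_left_comm]

theorem hasSum_mellin_of_tsum_cexp (hc : ∀ i, 0 < (c i).re) (hw : 0 < w.re)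
    (hF : ∀ t ∈ Ioi 0, F t = ∑' i, a i * cexp (-(c i * t)))
    (hsum : Summable fun i ↦ ‖a i‖ / (c i).re ^ w.re) :
    HasSum (fun i ↦ Gamma w * a i * c i ^ (-w)) (mellin F w) := by
  have hterm : ∀ i, ∫ t in Ioi (0 : ℝ), a i * ((t : ℂ) ^ (w - 1) * cexp (-(c i * t))) =
      Gamma w * a i * c i ^ (-w) := fun i ↦ by
    rw [integral_const_mul, integral_cpow_mul_cexp_neg_mul_Ioi hw (hc i)]
    ring
  rw [mellin_eq_integral_tsum hF]
  simpa only [hterm] using hasSum_integral_of_summable_integral_norm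
    (fun i ↦ (integrableOn_cpow_mul_cexp_neg_mul_Ioi hw (hc i)).const_mul (a i))
    (summable_integral_norm_mul_cpow_mul_cexp_neg_mul hc hw hsum)

end DirichletSeries

lemma summable_norm_div_rpow_of_norm_le_mul_rpow {E : Type*} [SeminormedAddCommGroup E]
    {a : ℕ+ → E} {A C σ : ℝ} (ha : ∀ n : ℕ+, ‖a n‖ ≤ C * (n : ℝ) ^ A) (hσ : A + 1 < σ) :
    Summable fun n : ℕ+ ↦ ‖a n‖ / (n : ℝ) ^ σ := by
  have hbound : Summable fun n : ℕ+ ↦ C * (n : ℝ) ^ A / (n : ℝ) ^ σ := by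
    refine (summable_pnat_iff_summable_nat.mpr
      (Real.summable_nat_rpow.mpr (by linarith : A - σ < -1))).mul_left C |>.congr fun n ↦ ?_
    rw [rpow_sub (by positivity), mul_div_assoc]
  exact hbound.of_nonneg_of_le (fun n ↦ by positivity) fun n ↦ by gcongr; exact ha n

open Complex in
theorem mellinConvergent_and_hasSum_of_tsum_cexp_pnat {a : ℕ+ → ℂ} {z w : ℂ} {F : ℝ → ℂ}
    (hz : 0 < z.re) (hw : 0 < w.re)
    (hF : ∀ t ∈ Ioi 0, F t = ∑' n : ℕ+, a n * cexp (-(2 * π * n * z * t)))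
    (hsum : Summable fun n : ℕ+ ↦ ‖a n‖ / (n : ℝ) ^ w.re) :
    MellinConvergent F w ∧
      HasSum (fun n ↦ (2 * π : ℂ) ^ (-w) * z ^ (-w) * Gamma w * (a n * (n : ℂ) ^ (-w)))
        (mellin F w) := by
  have hc_eq : ∀ n : ℕ+, (2 * π * n * z : ℂ) = ((2 * π * n : ℝ) : ℂ) * z := fun n ↦ by
    push_cast
    rfl
  have hc_re : ∀ n : ℕ+, (2 * π * n * z).re = 2 * π * z.re * n := fun n ↦ by
    rw [hc_eq, re_ofReal_mul]
    ring
  have hc : ∀ n : ℕ+, 0 < (2 * π * n * z).re := fun n ↦ by rw [hc_re]; positivity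
  have hsum' : Summable fun n : ℕ+ ↦ ‖a n‖ / (2 * π * n * z).re ^ w.re := by
    refine (hsum.div_const ((2 * π * z.re) ^ w.re)).congr fun n ↦ ?_
    rw [hc_re, mul_rpow (x := 2 * π * z.re) (by positivity) (by positivity), div_div, mul_comm]
  refine ⟨mellinConvergent_of_tsum_cexp hc hw hF hsum',
    (hasSum_mellin_of_tsum_cexp hc hw hF hsum').congr_fun fun n ↦ ?_⟩
  rw [hc_eq, ofReal_mul_cpow (by positivity), ofReal_mul,
    mul_cpow_ofReal_nonneg (by positivity) (by positivity)]
  push_cast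
  ring

theorem stmt8_general (k : ℤ) (A C : ℝ) (hA : 0 ≤ A) (a : ℕ+ → ℂ)
    (ha : ∀ n : ℕ+, ‖a n‖ ≤ C * (n : ℝ) ^ A)
    (f : ℂ → ℂ)
    (hf : ∀ z : ℂ, 0 < z.im →
      f z = ∑' n : ℕ+, a n * Complex.exp (2 * π * Complex.I * (n : ℂ) * z))
    (T : ℝ) (hT : 0 < T) (α : ℂ) (hα : α = -1 + Complex.I / T)
    (s : ℂ) (hs : A + 2 < s.re + ((k : ℝ) - 1) / 2) :
    IntegrableOn (fun t : ℝ => f (α * t) * (t : ℂ) ^ (s + ((k : ℂ) - 1) / 2 - 1))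
      (Set.Ioi 0) ∧
    Summable (fun n : ℕ+ => ‖a n * (n : ℂ) ^ (-(s + ((k : ℂ) - 1) / 2))‖) ∧
    ∫ t in Set.Ioi (0 : ℝ), f (α * t) * (t : ℂ) ^ (s + ((k : ℂ) - 1) / 2 - 1) =
      (2 * π : ℂ) ^ (-(s + ((k : ℂ) - 1) / 2)) *
        (-α * Complex.I) ^ (-(s + ((k : ℂ) - 1) / 2)) *
        Complex.Gamma (s + ((k : ℂ) - 1) / 2) *
        ∑' n : ℕ+, a n * (n : ℂ) ^ (-(s + ((k : ℂ) - 1) / 2)) := by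
  set w := s + ((k : ℂ) - 1) / 2
  have hAw : A + 2 < w.re := by simpa [w] using hs
  have hz : 0 < (-α * Complex.I).re := by simpa [hα] using hT
  have hF : ∀ t ∈ Ioi (0 : ℝ),
      f (α * t) = ∑' n : ℕ+, a n * Complex.exp (-(2 * π * n * (-α * Complex.I) * t)) := by
    intro t ht
    have him : 0 < (α * t).im := by simpa [hα] using mul_pos (inv_pos.mpr hT) ht
    rw [hf _ him]
    congr! 3
    congr 1
    ring
  have hsum := summable_norm_div_rpow_of_norm_le_mul_rpow ha (by linarith : A + 1 < w.re)
  obtain ⟨hconv, hmellin⟩ :=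
    mellinConvergent_and_hasSum_of_tsum_cexp_pnat hz (by linarith) hF hsum
  have hmul_comm : ∀ t ∈ Ioi (0 : ℝ),
      (t : ℂ) ^ (w - 1) • f (α * t) = f (α * t) * (t : ℂ) ^ (w - 1) :=
    fun t _ ↦ (smul_eq_mul _ _).trans (mul_comm _ _)
  refine ⟨hconv.congr_fun hmul_comm measurableSet_Ioi, hsum.congr fun n ↦ ?_, ?_⟩
  · rw [norm_mul, Complex.norm_natCast_cpow_of_pos n.pos, Complex.neg_re,
      rpow_neg (by positivity), div_eq_mul_inv]
  · rw [← setIntegral_congr_fun measurableSet_Ioi hmul_comm, ← tsum_mul_left]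
    exact hmellin.tsum_eq.symm

theorem stmt8 (k : ℤ) (A C : ℝ) (hA : 0 ≤ A) (hC : 0 < C) (a : ℕ+ → ℂ)
    (ha : ∀ n : ℕ+, ‖a n‖ ≤ C * (n : ℝ) ^ A)
    (f : ℂ → ℂ)
    (hf : ∀ z : ℂ, 0 < z.im →
      f z = ∑' n : ℕ+, a n * Complex.exp (2 * π * Complex.I * (n : ℂ) * z))
    (T : ℝ) (hT : 0 < T) (α : ℂ) (hα : α = -1 + Complex.I / T)
    (s : ℂ) (hs : A + 2 < s.re + ((k : ℝ) - 1) / 2) :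
    IntegrableOn (fun t : ℝ => f (α * t) * (t : ℂ) ^ (s + ((k : ℂ) - 1) / 2 - 1))
      (Set.Ioi 0) ∧
    Summable (fun n : ℕ+ => ‖a n * (n : ℂ) ^ (-(s + ((k : ℂ) - 1) / 2))‖) ∧
    ∫ t in Set.Ioi (0 : ℝ), f (α * t) * (t : ℂ) ^ (s + ((k : ℂ) - 1) / 2 - 1) =
      (2 * π : ℂ) ^ (-(s + ((k : ℂ) - 1) / 2)) *
        (-α * Complex.I) ^ (-(s + ((k : ℂ) - 1) / 2)) *
        Complex.Gamma (s + ((k : ℂ) - 1) / 2) *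
        ∑' n : ℕ+, a n * (n : ℂ) ^ (-(s + ((k : ℂ) - 1) / 2)) :=
  stmt8_general k A C hA a ha f hf T hT α hα s hs
end

section
/- Let f be a function on the upper half plane, k ∈ ℤ, C₁ > 0, C₂ ∈ ℂ with C₂ ≠ 0, and M, a > 0. Assume f(−C₁/z) = C₂ z^k f(z) for all z in the upper half plane, and |f(z)| ≤ M e^{−a·Im z} for all z in the upper half plane. Then for all T > 0 and t > 0, with α = −1 + i/T: |f(αt)| ≤ (M/|C₂|) · (|α| t)^{−k} · exp( −a C₁ / (T t |α|²) ). -/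
/-! Apply the decay bound at the image point `-C₁ / z`, which again lies in the upper half
plane, and solve the transformation law for `f z`. For `z = α t` one has `Im z = t / T` and
`|z| = |α| t`, so `Im (-C₁ / z) = C₁ Im z / |z|² = C₁ / (T t |α|²)`. -/

open Real

lemma Complex.im_neg_ofReal_div (c : ℝ) (z : ℂ) :
    (-(c : ℂ) / z).im = c * z.im / ‖z‖ ^ 2 := by
  rw [Complex.div_im, ← Complex.normSq_eq_norm_sq]
  simp [neg_div]

lemma norm_le_of_inversion_of_decay {f : ℂ → ℂ} {k : ℤ} {C₁ : ℝ} (hC₁ : 0 < C₁) {C₂ : ℂ}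
    (hC₂ : C₂ ≠ 0) {M a : ℝ}
    (hfe : ∀ z : ℂ, 0 < z.im → f (-(C₁ : ℂ) / z) = C₂ * z ^ k * f z)
    (hfb : ∀ z : ℂ, 0 < z.im → ‖f z‖ ≤ M * Real.exp (-a * z.im))
    {z : ℂ} (hz : 0 < z.im) :
    ‖f z‖ ≤ (M / ‖C₂‖) * ‖z‖ ^ (-k) * Real.exp (-a * (C₁ * z.im / ‖z‖ ^ 2)) := by
  have hz0 : 0 < ‖z‖ := norm_pos_iff.2 fun h ↦ by simp [h] at hz
  have him : 0 < (-(C₁ : ℂ) / z).im := by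
    rw [Complex.im_neg_ofReal_div]
    positivity
  have hw := hfb _ him
  rw [hfe z hz, Complex.im_neg_ofReal_div, norm_mul, norm_mul, norm_zpow] at hw
  have hpos : 0 < ‖C₂‖ * ‖z‖ ^ k := mul_pos (norm_pos_iff.2 hC₂) (zpow_pos hz0 k)
  calc ‖f z‖ ≤ M * Real.exp (-a * (C₁ * z.im / ‖z‖ ^ 2)) / (‖C₂‖ * ‖z‖ ^ k) := by
        rw [le_div_iff₀ hpos, mul_comm]
        exact hw
    _ = _ := by
        rw [zpow_neg]
        field_simp

theorem stmt11_general (f : ℂ → ℂ) (k : ℤ) (C₁ : ℝ) (hC₁ : 0 < C₁) (C₂ : ℂ) (hC₂ : C₂ ≠ 0)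
    (M a : ℝ)
    (hfe : ∀ z : ℂ, 0 < z.im → f (-(C₁ : ℂ) / z) = C₂ * z ^ k * f z)
    (hfb : ∀ z : ℂ, 0 < z.im → ‖f z‖ ≤ M * Real.exp (-a * z.im)) :
    ∀ T : ℝ, 0 < T → ∀ t : ℝ, 0 < t → ∀ α : ℂ, α = -1 + Complex.I / T →
      ‖f (α * t)‖ ≤
        (M / ‖C₂‖) * (‖α‖ * t) ^ (-k) * Real.exp (-a * C₁ / (T * t * ‖α‖ ^ 2)) := by
  rintro T hT t ht α rfl
  have him : ((-1 + Complex.I / T) * t).im = t / T := by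
    simp [Complex.div_im, Complex.normSq_apply]
    field_simp
  have hnorm : ‖(-1 + Complex.I / T) * t‖ = ‖-1 + Complex.I / T‖ * t := by
    rw [norm_mul, Complex.norm_real, Real.norm_of_nonneg ht.le]
  have hα : 0 < ‖-1 + Complex.I / T‖ := norm_pos_iff.2 fun h ↦ by simpa using congrArg Complex.re h
  have hexp : -a * (C₁ * (t / T) / (‖-1 + Complex.I / T‖ * t) ^ 2) =
      -a * C₁ / (T * t * ‖-1 + Complex.I / T‖ ^ 2) := by
    field_simp
  have key := norm_le_of_inversion_of_decay hC₁ hC₂ hfe hfb (z := (-1 + Complex.I / T) * t)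
    (by rw [him]; positivity)
  rwa [him, hnorm, hexp] at key

theorem stmt11 (f : ℂ → ℂ) (k : ℤ) (C₁ : ℝ) (hC₁ : 0 < C₁) (C₂ : ℂ) (hC₂ : C₂ ≠ 0)
    (M a : ℝ) (hM : 0 < M) (ha : 0 < a)
    (hfe : ∀ z : ℂ, 0 < z.im → f (-(C₁ : ℂ) / z) = C₂ * z ^ k * f z)
    (hfb : ∀ z : ℂ, 0 < z.im → ‖f z‖ ≤ M * Real.exp (-a * z.im)) :
    ∀ T : ℝ, 0 < T → ∀ t : ℝ, 0 < t → ∀ α : ℂ, α = -1 + Complex.I / T →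
      ‖f (α * t)‖ ≤
        (M / ‖C₂‖) * (‖α‖ * t) ^ (-k) * Real.exp (-a * C₁ / (T * t * ‖α‖ ^ 2)) :=
  stmt11_general f k C₁ hC₁ C₂ hC₂ M a hfe hfb
end

section
/- Fix r ∈ ℝ with r ≠ 0. There exist constants c > 0 and T₀ ≥ 2 (depending only on r) such that for every T ≥ T₀ and every T₁ with T ≤ T₁ ≤ T², the quantity D(T₁,T) = 2^{iT−3/2} · Γ((ir+iT+1/2)/2) · Γ(1/2) · Γ(−ir) · (1+T₁²)^{(−ir−iT−1/2)/2} / Γ((−ir−iT+1/2)/2) satisfies |D(T₁,T)| ≥ c·T^{−1}. -/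
/-! The two Gamma factors depending on `T` are conjugate, so their quotient has modulus one, and the
power of `2` has modulus `2^{-3/2}`. Hence `|D(T₁,T)| = 2^{-3/2} √π |Γ(-ir)| (1+T₁²)^{-1/4}`, and
`1 + T₁² ≤ 2T⁴` gives the bound with `c = 2^{-7/4} √π |Γ(-ir)|`, positive because `Γ` does not
vanish off the real axis. -/

open Real

namespace Complex

theorem Gamma_ne_zero_of_im_ne_zero {s : ℂ} (hs : s.im ≠ 0) : Gamma s ≠ 0 :=
  Gamma_ne_zero fun m hm => hs (by simp [hm])

theorem norm_Gamma_conj (s : ℂ) : ‖Gamma ((starRingEnd ℂ) s)‖ = ‖Gamma s‖ := by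
  rw [Gamma_conj, RCLike.norm_conj]

end Complex

open Complex in
theorem norm_two_cpow_mul_Gamma_div_Gamma (r T T₁ : ℝ) :
    ‖(2 : ℂ) ^ (I * T - 3 / 2) * Gamma ((I * r + I * T + 1 / 2) / 2) * Complex.Gamma (1 / 2) *
        Gamma (-I * r) * ((1 + T₁ ^ 2 : ℝ) : ℂ) ^ ((-I * r - I * T - 1 / 2) / 2) /
        Gamma ((-I * r - I * T + 1 / 2) / 2)‖ =
      (2 : ℝ) ^ (-(3 / 2) : ℝ) * √π * ‖Gamma (-I * r)‖ * (1 + T₁ ^ 2) ^ (-(1 / 4) : ℝ) := by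
  set z : ℂ := (I * r + I * T + 1 / 2) / 2
  have hz : Gamma z ≠ 0 := Gamma_ne_zero_of_re_pos (by simp [z])
  have hconj : (-I * r - I * T + 1 / 2) / 2 = starRingEnd ℂ z := by
    simp only [z, map_div₀, map_add, map_mul, conj_I, conj_ofReal, map_one, map_ofNat]
    ring
  have h2 : ‖(2 : ℂ) ^ (I * T - 3 / 2)‖ = (2 : ℝ) ^ (-(3 / 2) : ℝ) := by
    rw [show (2 : ℂ) = ((2 : ℝ) : ℂ) by norm_num, norm_cpow_eq_rpow_re_of_pos two_pos]
    norm_num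
  have hT₁ : ‖((1 + T₁ ^ 2 : ℝ) : ℂ) ^ ((-I * r - I * T - 1 / 2) / 2)‖ =
      (1 + T₁ ^ 2) ^ (-(1 / 4) : ℝ) := by
    rw [norm_cpow_eq_rpow_re_of_pos (by positivity)]
    norm_num
  have hhalf : ‖Complex.Gamma (1 / 2)‖ = √π := by
    rw [Complex.Gamma_one_half_eq, norm_cpow_eq_rpow_re_of_pos pi_pos, sqrt_eq_rpow]
    norm_num
  rw [hconj, norm_div, Complex.norm_Gamma_conj, norm_mul, norm_mul, norm_mul, norm_mul, h2, hT₁,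
    hhalf]
  field_simp [norm_ne_zero_iff.2 hz]

theorem two_rpow_neg_quarter_mul_inv_le {T T₁ : ℝ} (hT : 1 ≤ T) (hT₁ : T ≤ T₁)
    (hT₁' : T₁ ≤ T ^ 2) : (2 : ℝ) ^ (-(1 / 4) : ℝ) * T⁻¹ ≤ (1 + T₁ ^ 2) ^ (-(1 / 4) : ℝ) := by
  have hT0 : 0 < T := by linarith
  have hle : 1 + T₁ ^ 2 ≤ 2 * T ^ 4 := by nlinarith
  have hpow : (2 * T ^ 4) ^ (-(1 / 4) : ℝ) = (2 : ℝ) ^ (-(1 / 4) : ℝ) * T⁻¹ := by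
    rw [mul_rpow zero_le_two (by positivity), ← rpow_natCast T 4, ← rpow_mul hT0.le,
      ← rpow_neg_one]
    norm_num
  rw [← hpow]
  exact rpow_le_rpow_of_nonpos (by positivity) hle (by norm_num)

theorem stmt15 (r : ℝ) (hr : r ≠ 0) :
    ∃ c > (0 : ℝ), ∃ T₀ : ℝ, 2 ≤ T₀ ∧
      ∀ T : ℝ, T₀ ≤ T → ∀ T₁ : ℝ, T ≤ T₁ → T₁ ≤ T ^ 2 →
        c * T⁻¹ ≤
          ‖(2 : ℂ) ^ (Complex.I * T - 3 / 2) *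
              Complex.Gamma ((Complex.I * r + Complex.I * T + 1 / 2) / 2) *
              Complex.Gamma (1 / 2) * Complex.Gamma (-Complex.I * r) *
              ((1 + T₁ ^ 2 : ℝ) : ℂ) ^ ((-Complex.I * r - Complex.I * T - 1 / 2) / 2) /
              Complex.Gamma ((-Complex.I * r - Complex.I * T + 1 / 2) / 2)‖ := by
  set A := (2 : ℝ) ^ (-(3 / 2) : ℝ) * √π * ‖Complex.Gamma (-Complex.I * r)‖
  have hA : 0 < A := by
    have : Complex.Gamma (-Complex.I * r) ≠ 0 :=
      Complex.Gamma_ne_zero_of_im_ne_zero (by simpa using hr)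
    have := sqrt_pos.2 pi_pos
    positivity
  refine ⟨A * (2 : ℝ) ^ (-(1 / 4) : ℝ), by positivity, 2, le_rfl, fun T hT T₁ hT₁ hT₁' => ?_⟩
  rw [norm_two_cpow_mul_Gamma_div_Gamma, mul_assoc]
  exact mul_le_mul_of_nonneg_left
    (two_rpow_neg_quarter_mul_inv_le (by linarith) hT₁ hT₁') hA.le
end

section
/- There exists an absolute constant C > 0 such that the following holds. Let T ≥ 2, η > 0, ε > 0, set δ = T^{−(2η+ε)}, and assume δ ≤ 1/2. Let p, q, r, s ∈ ℝ with ps − qr = 1 and |p−1| ≤ δ, |s−1| ≤ δ, |q| ≤ δ, |r| ≤ δ, |p−s| ≤ δ. Define h₁(t) = ( r(p−tr) + (tr+s)((p−s)t − t²r + q) ) / ( r² + (tr+s)² ). Then for every integer β₁ ≥ 1 the function t ↦ h₁(t)^{β₁} is infinitely differentiable at 0 and for every n ≥ 0: | (d/dt)ⁿ [h₁(t)^{β₁}] at t = 0 | ≤ C^{β₁} · β₁! · n! · 2ⁿ · T^{−(η+ε/2)n}. -/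
open Real Metric
open scoped NNReal

/-- Transfer of iterated derivatives from ℂ to ℝ along the real axis. -/
private lemma stmt17_aux_transfer {F : ℂ → ℂ} {R : ℝ}
    (hF : AnalyticOnNhd ℂ F (Metric.ball (0:ℂ) R)) (n : ℕ) :
    ∀ t : ℝ, |t| < R →
      iteratedDeriv n (fun x : ℝ => (F ↑x).re) t = (iteratedDeriv n F ↑t).re := by
  have hmem : ∀ ⦃u : ℝ⦄, |u| < R → (↑u : ℂ) ∈ Metric.ball (0:ℂ) R := by
    intro u hu
    rw [mem_ball_zero_iff, Complex.norm_real, Real.norm_eq_abs]; exact hu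
  induction n with
  | zero => intro t ht; simp
  | succ n ih =>
    intro t ht
    rw [iteratedDeriv_succ, iteratedDeriv_succ]
    have h1 : HasDerivAt (iteratedDeriv n F) (deriv (iteratedDeriv n F) ↑t) ↑t := by
      simpa [← iteratedDeriv_eq_iterate] using
        (((hF.iterated_deriv n) ↑t (hmem ht)).differentiableAt).hasDerivAt
    have h2 : HasDerivAt (fun x : ℝ => ((iteratedDeriv n F) ↑x).re)
        ((deriv (iteratedDeriv n F) ↑t)).re t := h1.real_of_complex
    have hev : (fun x : ℝ => iteratedDeriv n (fun y : ℝ => (F ↑y).re) x) =ᶠ[nhds t]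
        fun x : ℝ => (iteratedDeriv n F ↑x).re := by
      have hopen : IsOpen {x : ℝ | |x| < R} := isOpen_lt continuous_abs continuous_const
      filter_upwards [hopen.mem_nhds ht] with x hx
      exact ih x hx
    rw [hev.deriv_eq, h2.deriv]

/-- Cauchy estimates for iterated derivatives at the center of a disk. -/
private lemma stmt17_aux_cauchy {F : ℂ → ℂ} {R M : ℝ} (hR : 0 < R)
    (hd : ∀ z : ℂ, ‖z‖ ≤ R → DifferentiableAt ℂ F z)
    (hb : ∀ z : ℂ, ‖z‖ ≤ R → ‖F z‖ ≤ M) (n : ℕ) :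
    ‖iteratedDeriv n F 0‖ ≤ n.factorial * M * R⁻¹ ^ n := by
  have hcoe : ((R.toNNReal : ℝ≥0) : ℝ) = R := Real.coe_toNNReal R hR.le
  have hd' : DifferentiableOn ℂ F (Metric.closedBall (0:ℂ) (R.toNNReal : ℝ)) := by
    rw [hcoe]
    intro z hz
    exact (hd z (by simpa [Metric.mem_closedBall] using hz)).differentiableWithinAt
  have hRpos : (0 : ℝ≥0) < R.toNNReal := Real.toNNReal_pos.2 hR
  have hasF : HasFPowerSeriesOnBall F (cauchyPowerSeries F 0 (R.toNNReal : ℝ)) 0 R.toNNReal :=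
    hd'.hasFPowerSeriesOnBall hRpos
  have hcont : Continuous fun θ : ℝ => ‖F (circleMap 0 R θ)‖ := by
    apply Continuous.norm
    rw [continuous_iff_continuousAt]
    intro θ
    have hDA : DifferentiableAt ℂ F (circleMap 0 R θ) :=
      hd _ (by simp [abs_of_nonneg hR.le])
    exact hDA.continuousAt.comp (continuous_circleMap 0 R).continuousAt
  have hcoeff : ∀ m : ℕ, ‖cauchyPowerSeries F 0 R m‖ ≤ M * R⁻¹ ^ m := by
    intro m
    refine (norm_cauchyPowerSeries_le F 0 R m).trans ?_
    rw [abs_of_nonneg hR.le]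
    refine mul_le_mul_of_nonneg_right ?_ (by positivity)
    have hInt : ∫ θ in (0:ℝ)..2 * π, ‖F (circleMap 0 R θ)‖ ≤ ∫ _ in (0:ℝ)..2 * π, M := by
      apply intervalIntegral.integral_mono_on Real.two_pi_pos.le
        (hcont.intervalIntegrable _ _) (intervalIntegrable_const)
      intro x _
      exact hb _ (by simp [abs_of_nonneg hR.le])
    rw [intervalIntegral.integral_const, smul_eq_mul] at hInt
    calc (2 * π)⁻¹ * ∫ θ in (0:ℝ)..2 * π, ‖F (circleMap 0 R θ)‖
        ≤ (2 * π)⁻¹ * ((2 * π - 0) * M) :=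
          mul_le_mul_of_nonneg_left hInt (by positivity)
      _ = M := by field_simp; ring
  have h1 : iteratedDeriv n F 0 = n.factorial • (cauchyPowerSeries F 0 R n fun _ => (1:ℂ)) := by
    rw [iteratedDeriv_eq_iteratedFDeriv, ← hasF.factorial_smul (1:ℂ) n, hcoe]
  rw [h1, ← Nat.cast_smul_eq_nsmul ℂ, norm_smul]
  simp only [Complex.norm_natCast]
  calc (n.factorial : ℝ) * ‖cauchyPowerSeries F 0 R n fun _ => (1:ℂ)‖
      ≤ (n.factorial : ℝ) * (‖cauchyPowerSeries F 0 R n‖ * 1) := by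
        refine mul_le_mul_of_nonneg_left ?_ (by positivity)
        simpa using (cauchyPowerSeries F 0 R n).le_opNorm fun _ => (1:ℂ)
    _ ≤ (n.factorial : ℝ) * (M * R⁻¹ ^ n) := by
        rw [mul_one]
        exact mul_le_mul_of_nonneg_left (hcoeff n) (by positivity)
    _ = n.factorial * M * R⁻¹ ^ n := by ring

/-- Norm estimates for the numerator and denominator on the disk of radius `(2σ)⁻¹`. -/
private lemma stmt17_aux_est {δ σ : ℝ} (hσ0 : 0 < σ) (hσ34 : σ ≤ 3/4) (hδσ : δ = σ ^ 2)
    {p q r s : ℝ} (hp : |p - 1| ≤ δ) (hs : |s - 1| ≤ δ) (hq : |q| ≤ δ) (hr : |r| ≤ δ)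
    (hps : |p - s| ≤ δ) (hδ2 : δ ≤ 1/2) {z : ℂ} (hz : ‖z‖ ≤ (2 * σ)⁻¹) :
    (1:ℝ)/64 ≤ ‖((r:ℂ) ^ 2 + (z * r + s) ^ 2)‖ ∧
    ‖((r:ℂ) * (p - z * r) + (z * r + s) * ((p - s) * z - z ^ 2 * r + q))‖ ≤ 5 := by
  have hδ0 : 0 ≤ δ := hδσ ▸ sq_nonneg σ
  obtain ⟨hp1, hp2⟩ := abs_le.1 hp
  obtain ⟨hs1, hs2⟩ := abs_le.1 hs
  obtain ⟨hq1, hq2⟩ := abs_le.1 hq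
  obtain ⟨hr1, hr2⟩ := abs_le.1 hr
  have hRδ : (2 * σ)⁻¹ * δ ≤ 3/8 := by
    rw [hδσ, show (2 * σ)⁻¹ * σ ^ 2 = σ / 2 by field_simp]
    linarith
  have hR2δ : ((2 * σ)⁻¹) ^ 2 * δ ≤ 1/4 := by
    rw [hδσ, show ((2 * σ)⁻¹) ^ 2 * σ ^ 2 = 1/4 by field_simp; ring]
  have hznn : (0:ℝ) ≤ ‖z‖ := norm_nonneg z
  have hzr : ‖z * (r:ℂ)‖ ≤ 3/8 := by
    rw [norm_mul, Complex.norm_real, Real.norm_eq_abs]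
    calc ‖z‖ * |r| ≤ (2 * σ)⁻¹ * δ :=
          mul_le_mul hz hr (abs_nonneg r) (by positivity)
      _ ≤ 3/8 := hRδ
  have hz2r : ‖z ^ 2 * (r:ℂ)‖ ≤ 1/4 := by
    rw [norm_mul, norm_pow, Complex.norm_real, Real.norm_eq_abs]
    calc ‖z‖ ^ 2 * |r| ≤ ((2 * σ)⁻¹) ^ 2 * δ :=
          mul_le_mul (by gcongr) hr (abs_nonneg r) (by positivity)
      _ ≤ 1/4 := hR2δ
  have hzps : ‖((p:ℂ) - s) * z‖ ≤ 3/8 := by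
    rw [norm_mul, show ((p:ℂ) - s) = ((p - s : ℝ) : ℂ) by push_cast; ring,
      Complex.norm_real, Real.norm_eq_abs]
    calc |p - s| * ‖z‖ ≤ δ * (2 * σ)⁻¹ := mul_le_mul hps hz hznn hδ0
      _ ≤ 3/8 := by rw [mul_comm]; exact hRδ
  have hrezr : -(3/8 : ℝ) ≤ (z * (r:ℂ)).re := by
    have h1 : |(z * (r:ℂ)).re| ≤ ‖z * (r:ℂ)‖ := Complex.abs_re_le_norm _
    have h2 := neg_abs_le ((z * (r:ℂ)).re)
    linarith
  have hps' : ‖(p:ℂ)‖ ≤ 3/2 := by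
    rw [Complex.norm_real, Real.norm_eq_abs, abs_le]; constructor <;> linarith
  have hss' : ‖(s:ℂ)‖ ≤ 3/2 := by
    rw [Complex.norm_real, Real.norm_eq_abs, abs_le]; constructor <;> linarith
  have hqq' : ‖(q:ℂ)‖ ≤ 1/2 := by
    rw [Complex.norm_real, Real.norm_eq_abs, abs_le]; constructor <;> linarith
  have hrr' : ‖(r:ℂ)‖ ≤ 1/2 := by
    rw [Complex.norm_real, Real.norm_eq_abs, abs_le]; constructor <;> linarith
  constructor
  · have hfact : ((r:ℂ) ^ 2 + (z * r + s) ^ 2)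
        = ((z * r + s) + Complex.I * r) * ((z * r + s) - Complex.I * r) := by
      linear_combination ((r:ℂ))^2 * Complex.I_sq
    rw [hfact, norm_mul]
    have hre1 : (1/8 : ℝ) ≤ ((z * (r:ℂ) + s) + Complex.I * r).re := by
      simp only [Complex.add_re, Complex.mul_re, Complex.I_re, Complex.I_im,
        Complex.ofReal_re, Complex.ofReal_im]
      have := hrezr
      simp only [Complex.mul_re, Complex.ofReal_re, Complex.ofReal_im] at this
      linarith
    have hre2 : (1/8 : ℝ) ≤ ((z * (r:ℂ) + s) - Complex.I * r).re := by
      simp only [Complex.sub_re, Complex.add_re, Complex.mul_re, Complex.I_re, Complex.I_im,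
        Complex.ofReal_re, Complex.ofReal_im]
      have := hrezr
      simp only [Complex.mul_re, Complex.ofReal_re, Complex.ofReal_im] at this
      linarith
    have h1 : (1/8 : ℝ) ≤ ‖(z * (r:ℂ) + s) + Complex.I * r‖ :=
      hre1.trans ((le_abs_self _).trans (Complex.abs_re_le_norm _))
    have h2 : (1/8 : ℝ) ≤ ‖(z * (r:ℂ) + s) - Complex.I * r‖ :=
      hre2.trans ((le_abs_self _).trans (Complex.abs_re_le_norm _))
    calc (1:ℝ)/64 = (1/8) * (1/8) := by norm_num
      _ ≤ _ := mul_le_mul h1 h2 (by norm_num) (norm_nonneg _)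
  · have hb1 : ‖(r:ℂ) * ((p:ℂ) - z * r)‖ ≤ 15/16 := by
      rw [norm_mul]
      calc ‖(r:ℂ)‖ * ‖(p:ℂ) - z * r‖ ≤ (1/2) * (15/8) := by
            apply mul_le_mul hrr' ?_ (norm_nonneg _) (by norm_num)
            calc ‖(p:ℂ) - z * r‖ ≤ ‖(p:ℂ)‖ + ‖z * (r:ℂ)‖ := norm_sub_le _ _
              _ ≤ 3/2 + 3/8 := add_le_add hps' hzr
              _ = 15/8 := by norm_num
        _ = 15/16 := by norm_num
    have hb2 : ‖z * (r:ℂ) + s‖ ≤ 15/8 := by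
      calc ‖z * (r:ℂ) + s‖ ≤ ‖z * (r:ℂ)‖ + ‖(s:ℂ)‖ := norm_add_le _ _
        _ ≤ 3/8 + 3/2 := add_le_add hzr hss'
        _ = 15/8 := by norm_num
    have hb3 : ‖((p:ℂ) - s) * z - z ^ 2 * r + q‖ ≤ 9/8 := by
      calc ‖((p:ℂ) - s) * z - z ^ 2 * r + q‖
          ≤ ‖((p:ℂ) - s) * z - z ^ 2 * r‖ + ‖(q:ℂ)‖ := norm_add_le _ _
        _ ≤ (‖((p:ℂ) - s) * z‖ + ‖z ^ 2 * (r:ℂ)‖) + ‖(q:ℂ)‖ :=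
            add_le_add (norm_sub_le _ _) le_rfl
        _ ≤ (3/8 + 1/4) + 1/2 := add_le_add (add_le_add hzps hz2r) hqq'
        _ = 9/8 := by norm_num
    calc ‖((r:ℂ) * (p - z * r) + (z * r + s) * ((p - s) * z - z ^ 2 * r + q))‖
        ≤ ‖(r:ℂ) * ((p:ℂ) - z * r)‖ + ‖(z * (r:ℂ) + s) * (((p:ℂ) - s) * z - z ^ 2 * r + q)‖ :=
          norm_add_le _ _
      _ ≤ 15/16 + (15/8) * (9/8) := by
          apply add_le_add hb1
          rw [norm_mul]
          exact mul_le_mul hb2 hb3 (norm_nonneg _) (by norm_num)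
      _ ≤ 5 := by norm_num

theorem stmt17 :
    ∃ C > (0 : ℝ), ∀ T η ε : ℝ, 2 ≤ T → 0 < η → 0 < ε →
      ∀ δ : ℝ, δ = T ^ (-(2 * η + ε)) → δ ≤ 1 / 2 →
        ∀ p q r s : ℝ, p * s - q * r = 1 →
          |p - 1| ≤ δ → |s - 1| ≤ δ → |q| ≤ δ → |r| ≤ δ → |p - s| ≤ δ →
            ∀ β₁ : ℕ, 1 ≤ β₁ →
              ContDiffAt ℝ (⊤ : ℕ∞)
                (fun t : ℝ =>
                  ((r * (p - t * r) + (t * r + s) * ((p - s) * t - t ^ 2 * r + q)) /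
                      (r ^ 2 + (t * r + s) ^ 2)) ^ β₁) 0 ∧
              ∀ n : ℕ,
                |iteratedDeriv n
                    (fun t : ℝ =>
                      ((r * (p - t * r) + (t * r + s) * ((p - s) * t - t ^ 2 * r + q)) /
                          (r ^ 2 + (t * r + s) ^ 2)) ^ β₁) 0| ≤
                  C ^ β₁ * (Nat.factorial β₁ : ℝ) * (Nat.factorial n : ℝ) * 2 ^ n *
                    T ^ (-(η + ε / 2) * n) := by
  refine ⟨320, by norm_num, ?_⟩
  intro T η ε hT hη hε δ hδ hδ2 p q r s hdet hp hs hq hr hps β₁ hβ₁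
  have hT0 : (0:ℝ) < T := lt_of_lt_of_le two_pos hT
  set σ : ℝ := T ^ (-(η + ε / 2)) with hσdef
  have hσ0 : 0 < σ := Real.rpow_pos_of_pos hT0 _
  have hδσ : δ = σ ^ 2 := by
    rw [hδ, hσdef, ← Real.rpow_natCast (T ^ (-(η + ε / 2))) 2, ← Real.rpow_mul hT0.le]
    norm_num
    ring_nf
  have hσ34 : σ ≤ 3 / 4 := by nlinarith [hδσ ▸ hδ2]
  have hσn : ∀ n : ℕ, T ^ (-(η + ε / 2) * (n:ℝ)) = σ ^ n := by
    intro n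
    rw [Real.rpow_mul hT0.le, Real.rpow_natCast]
  set R : ℝ := (2 * σ)⁻¹ with hRdef
  have hR0 : 0 < R := by positivity
  -- the complex extension
  set F : ℂ → ℂ := fun z =>
    (((r:ℂ) * (p - z * r) + (z * r + s) * ((p - s) * z - z ^ 2 * r + q)) /
      ((r:ℂ) ^ 2 + (z * r + s) ^ 2)) ^ β₁ with hFdef
  have hest := fun (z : ℂ) (hz : ‖z‖ ≤ R) =>
    stmt17_aux_est hσ0 hσ34 hδσ hp hs hq hr hps hδ2 hz
  have hdne : ∀ z : ℂ, ‖z‖ ≤ R → ((r:ℂ) ^ 2 + (z * r + s) ^ 2) ≠ 0 := by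
    intro z hz h0
    have := (hest z hz).1
    rw [h0, norm_zero] at this
    norm_num at this
  have hdiff : ∀ z : ℂ, ‖z‖ ≤ R → DifferentiableAt ℂ F z := by
    intro z hz
    apply DifferentiableAt.pow
    apply DifferentiableAt.div
    · fun_prop
    · fun_prop
    · exact hdne z hz
  have hFb : ∀ z : ℂ, ‖z‖ ≤ R → ‖F z‖ ≤ 320 ^ β₁ := by
    intro z hz
    obtain ⟨hden, hnum⟩ := hest z hz
    rw [hFdef]
    simp only [norm_pow, norm_div]
    apply pow_le_pow_left₀ (by positivity)
    rw [div_le_iff₀ (by linarith)]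
    calc ‖(r:ℂ) * (↑p - z * ↑r) + (z * ↑r + ↑s) * ((↑p - ↑s) * z - z ^ 2 * ↑r + ↑q)‖
        ≤ 5 := hnum
      _ = 320 * (1/64) := by norm_num
      _ ≤ 320 * ‖(r:ℂ) ^ 2 + (z * ↑r + ↑s) ^ 2‖ := by
          apply mul_le_mul_of_nonneg_left hden (by norm_num)
  -- identification of the real function with the restriction of F
  have hgF : ∀ x : ℝ, (F ↑x).re =
      ((r * (p - x * r) + (x * r + s) * ((p - s) * x - x ^ 2 * r + q)) /
        (r ^ 2 + (x * r + s) ^ 2)) ^ β₁ := by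
    intro x
    have hc : ((((r * (p - x * r) + (x * r + s) * ((p - s) * x - x ^ 2 * r + q)) /
        (r ^ 2 + (x * r + s) ^ 2)) ^ β₁ : ℝ) : ℂ) = F ↑x := by
      rw [hFdef]
      push_cast
      ring
    rw [← hc, Complex.ofReal_re]
  have hfun : (fun t : ℝ =>
      ((r * (p - t * r) + (t * r + s) * ((p - s) * t - t ^ 2 * r + q)) /
        (r ^ 2 + (t * r + s) ^ 2)) ^ β₁) = fun x : ℝ => (F ↑x).re :=
    funext fun x => (hgF x).symm
  have hAn : AnalyticOnNhd ℂ F (Metric.ball (0:ℂ) R) := by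
    apply DifferentiableOn.analyticOnNhd _ Metric.isOpen_ball
    intro z hz
    exact (hdiff z (le_of_lt (mem_ball_zero_iff.1 hz))).differentiableWithinAt
  constructor
  · -- smoothness
    rw [hfun]
    have hF0 : ContDiffAt ℂ ⊤ F 0 :=
      (hAn 0 (Metric.mem_ball_self hR0)).contDiffAt
    exact hF0.real_of_complex.of_le le_top
  · intro n
    have htrans := stmt17_aux_transfer hAn n 0 (by simpa using hR0)
    rw [hfun]
    rw [htrans]
    have hbound := stmt17_aux_cauchy hR0 hdiff hFb n
    rw [Complex.ofReal_zero]
    have habs : |(iteratedDeriv n F 0).re| ≤ ‖iteratedDeriv n F 0‖ :=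
      Complex.abs_re_le_norm _
    have hRinv : R⁻¹ = 2 * σ := by rw [hRdef, inv_inv]
    have hfac1 : (1:ℝ) ≤ (Nat.factorial β₁ : ℝ) :=
      Nat.one_le_cast.mpr (Nat.factorial_pos β₁)
    calc |(iteratedDeriv n F 0).re|
        ≤ ‖iteratedDeriv n F 0‖ := habs
      _ ≤ n.factorial * (320 : ℝ) ^ β₁ * R⁻¹ ^ n := hbound
      _ = (320 : ℝ) ^ β₁ * 1 * (n.factorial : ℝ) * 2 ^ n * σ ^ n := by
          rw [hRinv, mul_pow]; ring
      _ ≤ (320 : ℝ) ^ β₁ * (Nat.factorial β₁ : ℝ) * (n.factorial : ℝ) * 2 ^ n * σ ^ n := by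
          gcongr <;> first | positivity | exact hfac1
      _ = (320 : ℝ) ^ β₁ * (Nat.factorial β₁ : ℝ) * (n.factorial : ℝ) * 2 ^ n *
          T ^ (-(η + ε / 2) * n) := by rw [hσn n]
end
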